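/- arXiv:2003.09254 — 3 statements merged into one kernel-verified Lean document; each statement's English description precedes it below -/
import Mathlib

section
/- Suppose F2 is atomless conditionally to F1. Then there exists an F2-measurable random variable U : Ω → [0,1] that is uniformly distributed on [0,1] (i.e., the law of U under P is Lebesgue measure on [0,1]) and is independent of the σ-algebra F1. -/
open MeasureTheory ProbabilityTheory Set
open scoped ENNReal

/-- The conditional expectation (under `P`, defined on `F2`) of the indicator of `A`
given the sub-σ-algebra `F1`. -/
noncomputable def cexpInd {Ω : Type*} (F1 F2 : MeasurableSpace Ω) (P : @Measure Ω F2)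
    (A : Set Ω) : Ω → ℝ :=
  P[A.indicator (fun _ => (1 : ℝ)) | F1]

/-- `F2` is atomless conditionally to `F1`: for every `A ∈ F2` there is `B ∈ F2`, `B ⊆ A`,
with `0 < E[1_B | F1] < E[1_A | F1]` almost surely on the set `{E[1_A | F1] > 0}`. -/
def CondAtomless {Ω : Type*} (F1 F2 : MeasurableSpace Ω) (P : @Measure Ω F2) : Prop :=
  ∀ A : Set Ω, MeasurableSet[F2] A → ∃ B : Set Ω, MeasurableSet[F2] B ∧ B ⊆ A ∧
    ∀ᵐ ω ∂P, 0 < cexpInd F1 F2 P A ω →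
      0 < cexpInd F1 F2 P B ω ∧ cexpInd F1 F2 P B ω < cexpInd F1 F2 P A ω

open Filter
open scoped Topology

/-!
Iterated halving combined with an exhaustion argument upgrades conditional atomlessness to a
conditional intermediate value property: for `A ∈ F2` and `F1`-measurable `0 ≤ g ≤ E[1_A | F1]`
some `B ⊆ A` in `F2` has `E[1_B | F1] = g`. Halving repeatedly gives sets `S n k`, increasing in
`k`, with `S (n + 1) (2 k) = S n k` and `E[1_{S n k} | F1] = k / 2 ^ n`. The random variable
`U = inf_n min {k | ω ∈ S n k} / 2 ^ n` has `{U < x} = ⋃ n, S n (⌈x 2 ^ n⌉ - 1)`, hence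
`P (U < x, C) = x P C` for all `C ∈ F1` and `x ∈ (0, 1]`: `U` is uniform and independent of `F1`.
-/

section CexpInd

variable {Ω : Type*} {m m0 : MeasurableSpace Ω} {μ : Measure Ω} {A B C : Set Ω}

lemma stronglyMeasurable_cexpInd : StronglyMeasurable[m] (cexpInd m m0 μ A) :=
  stronglyMeasurable_condExp

lemma cexpInd_nonneg : 0 ≤ᵐ[μ] cexpInd m m0 μ A :=
  condExp_nonneg (ae_of_all _ (indicator_nonneg fun _ _ => zero_le_one))

variable [IsFiniteMeasure μ]

lemma integrable_indicator_one (hA : MeasurableSet A) :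
    Integrable (A.indicator fun _ => (1 : ℝ)) μ :=
  (integrable_const 1).indicator hA

lemma cexpInd_mono (hA : MeasurableSet A) (hB : MeasurableSet B) (hBA : B ⊆ A) :
    cexpInd m m0 μ B ≤ᵐ[μ] cexpInd m m0 μ A :=
  condExp_mono (integrable_indicator_one hB) (integrable_indicator_one hA)
    (ae_of_all _ (indicator_le_indicator_of_subset hBA fun _ => zero_le_one))

lemma cexpInd_univ (hm : m ≤ m0) : cexpInd m m0 μ univ = fun _ => 1 := by
  simp only [cexpInd, indicator_univ, condExp_const hm]

lemma cexpInd_le_one (hm : m ≤ m0) (hA : MeasurableSet A) :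
    cexpInd m m0 μ A ≤ᵐ[μ] fun _ => 1 := by
  simpa [cexpInd_univ hm] using cexpInd_mono (m := m) (μ := μ) .univ hA (subset_univ A)

lemma cexpInd_union (hA : MeasurableSet A) (hB : MeasurableSet B) (hAB : Disjoint A B) :
    cexpInd m m0 μ (A ∪ B) =ᵐ[μ] cexpInd m m0 μ A + cexpInd m m0 μ B := by
  simp only [cexpInd, indicator_union_of_disjoint hAB]
  exact condExp_add (integrable_indicator_one hA) (integrable_indicator_one hB) m

lemma cexpInd_diff (hA : MeasurableSet A) (hB : MeasurableSet B) (hBA : B ⊆ A) :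
    cexpInd m m0 μ (A \ B) =ᵐ[μ] cexpInd m m0 μ A - cexpInd m m0 μ B := by
  have h := cexpInd_union (m := m) (μ := μ) hB (hA.diff hB) disjoint_sdiff_right
  rw [union_sdiff_cancel hBA] at h
  filter_upwards [h] with ω hω
  simp only [hω, Pi.add_apply, Pi.sub_apply, add_sub_cancel_left]

lemma cexpInd_inter (hB : MeasurableSet B) (hC : MeasurableSet[m] C) :
    cexpInd m m0 μ (B ∩ C) =ᵐ[μ] C.indicator (cexpInd m m0 μ B) := by
  rw [cexpInd, inter_comm, ← indicator_indicator]
  exact condExp_indicator (integrable_indicator_one hB) hC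

lemma setIntegral_cexpInd (hm : m ≤ m0) (hA : MeasurableSet A) (hC : MeasurableSet[m] C) :
    ∫ ω in C, cexpInd m m0 μ A ω ∂μ = μ.real (A ∩ C) := by
  rw [cexpInd, setIntegral_condExp hm (integrable_indicator_one hA) hC, ← Pi.one_def,
    integral_indicator_one hA, measureReal_restrict_apply hA]

lemma cexpInd_le_of_measureReal_inter_le (hm : m ≤ m0) (hA : MeasurableSet A) {g : Ω → ℝ}
    (hg : StronglyMeasurable[m] g) (hgi : Integrable g μ)
    (h : ∀ C, MeasurableSet[m] C → μ.real (A ∩ C) ≤ ∫ ω in C, g ω ∂μ) :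
    cexpInd m m0 μ A ≤ᵐ[μ] g := by
  refine ae_le_of_ae_le_trim (hm := hm) <| ae_le_of_forall_setIntegral_le
    (integrable_condExp.trim hm stronglyMeasurable_cexpInd) (hgi.trim hm hg) fun C hC _ => ?_
  rw [← setIntegral_trim hm stronglyMeasurable_cexpInd hC, ← setIntegral_trim hm hg hC,
    setIntegral_cexpInd hm hA hC]
  exact h C hC

lemma cexpInd_iUnion_le (hm : m ≤ m0) {B : ℕ → Set Ω} (hB : ∀ n, MeasurableSet (B n))
    (hB_mono : Monotone B) {g : Ω → ℝ} (hg : StronglyMeasurable[m] g) (hgi : Integrable g μ)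
    (hBg : ∀ n, cexpInd m m0 μ (B n) ≤ᵐ[μ] g) :
    cexpInd m m0 μ (⋃ n, B n) ≤ᵐ[μ] g := by
  refine cexpInd_le_of_measureReal_inter_le hm (.iUnion hB) hg hgi fun C hC => ?_
  have hlim : Tendsto (fun n => μ.real (B n ∩ C)) atTop
      (𝓝 (μ.real ((⋃ n, B n) ∩ C))) := by
    rw [iUnion_inter]
    exact (ENNReal.tendsto_toReal (measure_ne_top _ _)).comp
      (tendsto_measure_iUnion_atTop fun i j hij => inter_subset_inter_left C (hB_mono hij))
  refine le_of_tendsto' hlim fun n => ?_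
  rw [← setIntegral_cexpInd hm (hB n) hC]
  exact setIntegral_mono_ae integrable_condExp.integrableOn hgi.integrableOn (hBg n)

lemma measure_inter_pos_of_cexpInd_pos (hm : m ≤ m0) (hB : MeasurableSet B)
    (hC : MeasurableSet[m] C) (hC_pos : 0 < μ C)
    (hpos : ∀ᵐ ω ∂μ, ω ∈ C → 0 < cexpInd m m0 μ B ω) : 0 < μ (B ∩ C) := by
  have hint : 0 < ∫ ω in C, cexpInd m m0 μ B ω ∂μ := by
    rw [setIntegral_pos_iff_support_of_nonneg_ae (ae_restrict_of_ae cexpInd_nonneg)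
      integrable_condExp.integrableOn]
    refine hC_pos.trans_le (measure_mono_ae ?_)
    filter_upwards [hpos] with ω hω hωC
    exact ⟨(hω hωC).ne', hωC⟩
  rw [setIntegral_cexpInd hm hB hC, measureReal_def] at hint
  exact (ENNReal.toReal_pos_iff.mp hint).1

lemma measure_inter_eq_of_cexpInd_eq_const (hm : m ≤ m0) (hA : MeasurableSet A) {a : ℝ}
    (ha : 0 ≤ a) (hAa : cexpInd m m0 μ A =ᵐ[μ] fun _ => a) (hC : MeasurableSet[m] C) :
    μ (A ∩ C) = ENNReal.ofReal a * μ C := by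
  have h := setIntegral_cexpInd (μ := μ) hm hA hC
  rw [setIntegral_congr_ae (hm _ hC) (hAa.mono fun _ hω _ => hω), setIntegral_const,
    smul_eq_mul] at h
  rw [← ofReal_measureReal (μ := μ), ← ofReal_measureReal (μ := μ) (s := C), ← h,
    mul_comm, ENNReal.ofReal_mul ha]

end CexpInd

section MeasureFacts

variable {α : Type*} [MeasurableSpace α]

lemma exists_measure_pos_two_inv_pow_lt_sub {μ : Measure α} {f g : α → ℝ} (hfg : f ≤ᵐ[μ] g)
    (hne : ¬ f =ᵐ[μ] g) :
    ∃ n : ℕ, 0 < μ {ω | 2⁻¹ ^ n < g ω - f ω} := by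
  by_contra! h
  have hsmall : ∀ᵐ ω ∂μ, ∀ n : ℕ, ¬ 2⁻¹ ^ n < g ω - f ω :=
    ae_all_iff.2 fun n => measure_eq_zero_iff_ae_notMem.1 (nonpos_iff_eq_zero.1 (h n))
  refine hne ?_
  filter_upwards [hsmall, hfg] with ω h1 h2
  by_contra hω
  obtain ⟨n, hn⟩ := exists_pow_lt_of_lt_one (sub_pos.2 (lt_of_le_of_ne h2 hω))
    (by norm_num : (2 : ℝ)⁻¹ < 1)
  exact h1 n hn

lemma exists_maximal_measure_of_iUnion_mem (μ : Measure α) [IsFiniteMeasure μ]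
    {G : Set (Set α)} (hG_ne : G.Nonempty)
    (hG : ∀ B : ℕ → Set α, Monotone B → (∀ n, B n ∈ G) → ⋃ n, B n ∈ G) :
    ∃ B ∈ G, ∀ B' ∈ G, B ⊆ B' → μ B' ≤ μ B := by
  let S : Set α → Set ℝ := fun D => μ.real '' {B | B ∈ G ∧ D ⊆ B}
  have hS_bdd : ∀ D, BddAbove (S D) := fun D =>
    ⟨μ.real univ, by rintro _ ⟨B, -, rfl⟩; exact measureReal_mono (subset_univ B)⟩
  have step : ∀ (n : ℕ) (D : Set α), D ∈ G →
      ∃ D' ∈ G, D ⊆ D' ∧ sSup (S D) < μ.real D' + 1 / (n + 1) := by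
    intro n D hD
    have hne : (S D).Nonempty := ⟨μ.real D, D, ⟨hD, subset_rfl⟩, rfl⟩
    obtain ⟨_, ⟨D', ⟨hD'G, hDD'⟩, rfl⟩, hlt⟩ :=
      exists_lt_of_lt_csSup hne (sub_lt_self (sSup (S D)) Nat.one_div_pos_of_nat)
    exact ⟨D', hD'G, hDD', sub_lt_iff_lt_add.mp hlt⟩
  choose! next hnext_mem hnext_sup hnext_lt using step
  obtain ⟨B₀, hB₀⟩ := hG_ne
  let seq : ℕ → Set α := fun n => Nat.rec (motive := fun _ => Set α) B₀ next n
  have hseq_mem : ∀ n, seq n ∈ G := fun n => by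
    induction n with
    | zero => exact hB₀
    | succ n ih => exact hnext_mem n _ ih
  have hseq_mono : Monotone seq :=
    monotone_nat_of_le_succ fun n => hnext_sup n _ (hseq_mem n)
  refine ⟨⋃ n, seq n, hG seq hseq_mono hseq_mem, fun B' hB' hsub => ?_⟩
  have hB'_le : ∀ n : ℕ, μ.real B' ≤ μ.real (⋃ n, seq n) + 1 / (n + 1) := fun n =>
    calc μ.real B' ≤ sSup (S (seq n)) :=
          le_csSup (hS_bdd _) ⟨B', ⟨hB', (subset_iUnion seq n).trans hsub⟩, rfl⟩
      _ ≤ μ.real (seq (n + 1)) + 1 / (n + 1) := (hnext_lt n _ (hseq_mem n)).le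
      _ ≤ μ.real (⋃ n, seq n) + 1 / (n + 1) :=
          add_le_add_left (measureReal_mono (subset_iUnion seq (n + 1))) _
  have hlim : Tendsto (fun n : ℕ => μ.real (⋃ n, seq n) + 1 / (n + 1)) atTop
      (𝓝 (μ.real (⋃ n, seq n))) := by
    simpa using tendsto_one_div_add_atTop_nhds_zero_nat.const_add (μ.real (⋃ n, seq n))
  exact (ENNReal.toReal_le_toReal (measure_ne_top _ _) (measure_ne_top _ _)).mp
    (ge_of_tendsto' hlim hB'_le)

end MeasureFacts

lemma tendsto_natCeil_mul_two_pow_sub_one_div {x : ℝ} (hx : 0 < x) :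
    Tendsto (fun n : ℕ => ((⌈x * 2 ^ n⌉₊ - 1 : ℕ) : ℝ) / 2 ^ n) atTop (𝓝 x) := by
  have h2 : Tendsto (fun n : ℕ => (2 : ℝ) ^ n) atTop atTop :=
    tendsto_pow_atTop_atTop_of_one_lt one_lt_two
  have h := ((tendsto_nat_ceil_mul_div_atTop hx.le).comp h2).sub
    (tendsto_inv_atTop_zero.comp h2)
  rw [sub_zero] at h
  refine h.congr fun n => ?_
  rw [Nat.cast_sub (Nat.one_le_ceil_iff.2 (by positivity)), sub_div]
  simp

namespace CondAtomless

variable {Ω : Type*} {m m0 : MeasurableSpace Ω} {μ : Measure Ω} [IsFiniteMeasure μ]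
  {A : Set Ω}

lemma exists_subset_cexpInd_le_half (hm : m ≤ m0) (hatom : CondAtomless m m0 μ)
    (hA : MeasurableSet A) :
    ∃ B, MeasurableSet B ∧ B ⊆ A ∧
      (cexpInd m m0 μ B ≤ᵐ[μ] fun ω => cexpInd m m0 μ A ω / 2) ∧
      ∀ᵐ ω ∂μ, 0 < cexpInd m m0 μ A ω → 0 < cexpInd m m0 μ B ω := by
  obtain ⟨B, hB, hBA, hB_lt⟩ := hatom A hA
  -- keep `B` where it carries at most half of `A`, and `A \ B` elsewhere
  set C : Set Ω := {ω | cexpInd m m0 μ B ω ≤ cexpInd m m0 μ A ω / 2}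
  have hC : MeasurableSet[m] C := measurableSet_le stronglyMeasurable_cexpInd.measurable
    (stronglyMeasurable_cexpInd.measurable.div_const 2)
  have hBC := hB.inter (hm _ hC)
  have hABC := (hA.diff hB).inter (hm _ hC.compl)
  have hdisj : Disjoint (B ∩ C) ((A \ B) ∩ Cᶜ) :=
    disjoint_compl_right.mono inter_subset_right inter_subset_right
  have hE : cexpInd m m0 μ (B ∩ C ∪ (A \ B) ∩ Cᶜ) =ᵐ[μ]
      C.indicator (cexpInd m m0 μ B) + Cᶜ.indicator (cexpInd m m0 μ A - cexpInd m m0 μ B) := by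
    filter_upwards [cexpInd_union (m := m) hBC hABC hdisj, cexpInd_inter hB hC,
      cexpInd_inter (hA.diff hB) hC.compl, cexpInd_diff (m := m) hA hB hBA] with ω h1 h2 h3 h4
    rw [h1, Pi.add_apply, h2, h3]
    by_cases hω : ω ∈ C <;> simp [hω, h4]
  refine ⟨_, hBC.union hABC,
    union_subset (inter_subset_left.trans hBA) (inter_subset_left.trans sdiff_subset), ?_, ?_⟩
  · filter_upwards [hE] with ω hω
    by_cases hωC : ω ∈ C
    · have h : cexpInd m m0 μ B ω ≤ cexpInd m m0 μ A ω / 2 := hωC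
      simpa [hω, hωC] using h
    · have h : cexpInd m m0 μ A ω / 2 < cexpInd m m0 μ B ω := not_le.mp hωC
      simp only [hω, Pi.add_apply, indicator_of_notMem hωC, mem_compl hωC, indicator_of_mem,
        Pi.sub_apply, zero_add]
      linarith
  · filter_upwards [hE, hB_lt] with ω hω hωB hpos
    obtain ⟨h1, h2⟩ := hωB hpos
    by_cases hωC : ω ∈ C <;> simp [hω, hωC, h1, h2]

lemma exists_subset_cexpInd_le_pow (hm : m ≤ m0) (hatom : CondAtomless m m0 μ)
    (hA : MeasurableSet A) (n : ℕ) :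
    ∃ B, MeasurableSet B ∧ B ⊆ A ∧
      (cexpInd m m0 μ B ≤ᵐ[μ] fun ω => 2⁻¹ ^ n * cexpInd m m0 μ A ω) ∧
      ∀ᵐ ω ∂μ, 0 < cexpInd m m0 μ A ω → 0 < cexpInd m m0 μ B ω := by
  induction n with
  | zero => exact ⟨A, hA, subset_rfl, ae_of_all _ fun _ => by simp, ae_of_all _ fun _ => id⟩
  | succ n ih =>
    obtain ⟨D, hD, hDA, hD_le, hD_pos⟩ := ih
    obtain ⟨B, hB, hBD, hB_le, hB_pos⟩ := exists_subset_cexpInd_le_half hm hatom hD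
    refine ⟨B, hB, hBD.trans hDA, ?_, ?_⟩
    · filter_upwards [hB_le, hD_le] with ω h1 h2
      rw [pow_succ]
      linarith
    · filter_upwards [hB_pos, hD_pos] with ω h1 h2 h
      exact h1 (h2 h)

lemma exists_subset_sdiff_cexpInd_union_le (hm : m ≤ m0) (hatom : CondAtomless m m0 μ)
    (hA : MeasurableSet A) {B : Set Ω} (hB : MeasurableSet B) (hBA : B ⊆ A) {g : Ω → ℝ}
    (hg : Measurable[m] g) (hgA : g ≤ᵐ[μ] cexpInd m m0 μ A) (hBg : cexpInd m m0 μ B ≤ᵐ[μ] g)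
    {n : ℕ} (hT_pos : 0 < μ {ω | 2⁻¹ ^ n < g ω - cexpInd m m0 μ B ω}) :
    ∃ E, MeasurableSet E ∧ E ⊆ A \ B ∧ 0 < μ E ∧ cexpInd m m0 μ (B ∪ E) ≤ᵐ[μ] g := by
  set T := {ω | 2⁻¹ ^ n < g ω - cexpInd m m0 μ B ω}
  have hT : MeasurableSet[m] T :=
    measurableSet_lt measurable_const (hg.sub stronglyMeasurable_cexpInd.measurable)
  -- `E` is so small that on `T` it fits into the gap `g - cexpInd B`; off `T` we add nothing
  obtain ⟨E, hE, hEA, hE_le, hE_pos⟩ := exists_subset_cexpInd_le_pow hm hatom (hA.diff hB) n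
  have hET := hE.inter (hm _ hT)
  refine ⟨E ∩ T, hET, inter_subset_left.trans hEA, ?_, ?_⟩
  · refine measure_inter_pos_of_cexpInd_pos hm hE hT hT_pos ?_
    filter_upwards [hE_pos, cexpInd_diff (m := m) hA hB hBA, hgA] with ω h1 h2 h3 hω
    have hωT : 2⁻¹ ^ n < g ω - cexpInd m m0 μ B ω := hω
    refine h1 ?_
    rw [h2, Pi.sub_apply]
    linarith [pow_pos (by norm_num : (0 : ℝ) < 2⁻¹) n]
  · have hdisj : Disjoint B (E ∩ T) :=
      disjoint_sdiff_right.mono_right (inter_subset_left.trans hEA)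
    filter_upwards [cexpInd_union (m := m) hB hET hdisj, cexpInd_inter hE hT, hE_le,
      cexpInd_le_one hm (hA.diff hB), hBg] with ω h1 h2 h3 h4 h5
    rw [h1, Pi.add_apply, h2]
    by_cases hω : ω ∈ T
    · have hωT : 2⁻¹ ^ n < g ω - cexpInd m m0 μ B ω := hω
      have : 2⁻¹ ^ n * cexpInd m m0 μ (A \ B) ω ≤ 2⁻¹ ^ n :=
        mul_le_of_le_one_right (by positivity) h4
      rw [indicator_of_mem hω]
      linarith
    · rw [indicator_of_notMem hω, add_zero]
      exact h5

theorem exists_subset_cexpInd_eq (hm : m ≤ m0) (hatom : CondAtomless m m0 μ)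
    (hA : MeasurableSet A) {g : Ω → ℝ} (hg : Measurable[m] g) (hg0 : 0 ≤ᵐ[μ] g)
    (hgA : g ≤ᵐ[μ] cexpInd m m0 μ A) :
    ∃ B, MeasurableSet B ∧ B ⊆ A ∧ cexpInd m m0 μ B =ᵐ[μ] g := by
  have hgi : Integrable g μ :=
    integrable_condExp.mono' (hg.mono hm le_rfl).aestronglyMeasurable <| by
      filter_upwards [hg0, hgA] with ω h0 h1
      rwa [Real.norm_of_nonneg h0]
  let G : Set (Set Ω) := {B | MeasurableSet B ∧ B ⊆ A ∧ cexpInd m m0 μ B ≤ᵐ[μ] g}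
  have hG_ne : G.Nonempty :=
    ⟨∅, .empty, empty_subset A, by simpa [cexpInd, ← Pi.zero_def] using hg0⟩
  have hG_iUnion : ∀ B : ℕ → Set Ω, Monotone B → (∀ n, B n ∈ G) → ⋃ n, B n ∈ G :=
    fun B hB_mono hB => ⟨.iUnion fun n => (hB n).1, iUnion_subset fun n => (hB n).2.1,
      cexpInd_iUnion_le hm (fun n => (hB n).1) hB_mono hg.stronglyMeasurable hgi
        fun n => (hB n).2.2⟩
  obtain ⟨B, ⟨hB, hBA, hBg⟩, hB_max⟩ :=
    exists_maximal_measure_of_iUnion_mem μ hG_ne hG_iUnion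
  refine ⟨B, hB, hBA, ?_⟩
  by_contra hne
  obtain ⟨n, hT_pos⟩ := exists_measure_pos_two_inv_pow_lt_sub hBg hne
  obtain ⟨E, hE, hEA, hE_pos, hBE⟩ :=
    exists_subset_sdiff_cexpInd_union_le hm hatom hA hB hBA hg hgA hBg hT_pos
  have h := hB_max _ ⟨hB.union hE, union_subset hBA (hEA.trans sdiff_subset), hBE⟩
    subset_union_left
  rw [measure_union (disjoint_sdiff_right.mono_right hEA) hE] at h
  exact (ENNReal.lt_add_right (measure_ne_top μ B) hE_pos.ne').not_ge h

lemma exists_halving (hm : m ≤ m0) (hatom : CondAtomless m m0 μ) :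
    ∃ half : Set Ω → Set Ω, (∀ D, half D ⊆ D) ∧ ∀ D, MeasurableSet D →
      MeasurableSet (half D) ∧
        cexpInd m m0 μ (half D) =ᵐ[μ] fun ω => cexpInd m m0 μ D ω / 2 := by
  have h : ∀ D : Set Ω, ∃ B ⊆ D, MeasurableSet D →
      MeasurableSet B ∧ cexpInd m m0 μ B =ᵐ[μ] fun ω => cexpInd m m0 μ D ω / 2 := by
    intro D
    by_cases hD : MeasurableSet D
    · have hc := cexpInd_nonneg (m := m) (μ := μ) (A := D)
      obtain ⟨B, hB, hBD, hBc⟩ := hatom.exists_subset_cexpInd_eq hm hD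
        (g := fun ω => cexpInd m m0 μ D ω / 2)
        (stronglyMeasurable_cexpInd.measurable.div_const 2)
        (by filter_upwards [hc] with ω hω using div_nonneg hω zero_le_two)
        (by filter_upwards [hc] with ω hω using half_le_self hω)
      exact ⟨B, hBD, fun _ => ⟨hB, hBc⟩⟩
    · exact ⟨∅, empty_subset D, fun h => absurd h hD⟩
  choose half h_sub h_half using h
  exact ⟨half, h_sub, h_half⟩

end CondAtomless

section DyadicChain

variable {Ω : Type*} (half : Set Ω → Set Ω)

/-- Level `n + 1` keeps the sets of level `n` at the even indices and inserts `half` of each gap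
between consecutive ones at the odd indices. -/
def dyadicChain : ℕ → ℕ → Set Ω
  | 0, k => if k = 0 then ∅ else univ
  | n + 1, k => if k % 2 = 0 then dyadicChain n (k / 2)
      else dyadicChain n (k / 2) ∪ half (dyadicChain n (k / 2 + 1) \ dyadicChain n (k / 2))

variable {half}

@[simp]
lemma dyadicChain_succ_two_mul (n k : ℕ) :
    dyadicChain half (n + 1) (2 * k) = dyadicChain half n k := by
  simp [dyadicChain]

lemma dyadicChain_succ_two_mul_add_one (n k : ℕ) :
    dyadicChain half (n + 1) (2 * k + 1) = dyadicChain half n k ∪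
      half (dyadicChain half n (k + 1) \ dyadicChain half n k) := by
  simp [dyadicChain, Nat.add_mod, show (2 * k + 1) / 2 = k by omega]

lemma dyadicChain_of_two_pow_le {n k : ℕ} (hk : 2 ^ n ≤ k) :
    dyadicChain half n k = univ := by
  induction n generalizing k with
  | zero => simp [dyadicChain, show k ≠ 0 by rw [pow_zero] at hk; omega]
  | succ n ih =>
    obtain ⟨j, rfl | rfl⟩ := Nat.even_or_odd' k
    · rw [dyadicChain_succ_two_mul, ih (by rw [pow_succ] at hk; omega)]
    · rw [dyadicChain_succ_two_mul_add_one, ih (by rw [pow_succ] at hk; omega), univ_union]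

lemma dyadicChain_mono (h_sub : ∀ D, half D ⊆ D) (n : ℕ) : Monotone (dyadicChain half n) := by
  refine monotone_nat_of_le_succ fun k => ?_
  induction n generalizing k with
  | zero => by_cases hk : k = 0 <;> simp [dyadicChain, hk]
  | succ n ih =>
    obtain ⟨j, rfl | rfl⟩ := Nat.even_or_odd' k
    · rw [dyadicChain_succ_two_mul_add_one, dyadicChain_succ_two_mul]
      exact subset_union_left
    · rw [dyadicChain_succ_two_mul_add_one, show 2 * j + 1 + 1 = 2 * (j + 1) by ring,
        dyadicChain_succ_two_mul]
      exact union_subset (ih j) ((h_sub _).trans sdiff_subset)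

lemma measurableSet_dyadicChain [MeasurableSpace Ω]
    (h_meas : ∀ D, MeasurableSet D → MeasurableSet (half D)) (n k : ℕ) :
    MeasurableSet (dyadicChain half n k) := by
  induction n generalizing k with
  | zero => by_cases hk : k = 0 <;> simp [dyadicChain, hk]
  | succ n ih =>
    obtain ⟨j, rfl | rfl⟩ := Nat.even_or_odd' k
    · rw [dyadicChain_succ_two_mul]
      exact ih j
    · rw [dyadicChain_succ_two_mul_add_one]
      exact (ih j).union (h_meas _ ((ih (j + 1)).diff (ih j)))

end DyadicChain

lemma cexpInd_dyadicChain {Ω : Type*} {m m0 : MeasurableSpace Ω} {μ : Measure Ω}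
    [IsFiniteMeasure μ] (hm : m ≤ m0) {half : Set Ω → Set Ω} (h_sub : ∀ D, half D ⊆ D)
    (h_meas : ∀ D, MeasurableSet D → MeasurableSet (half D))
    (h_half : ∀ D, MeasurableSet D →
      cexpInd m m0 μ (half D) =ᵐ[μ] fun ω => cexpInd m m0 μ D ω / 2)
    {n k : ℕ} (hk : k ≤ 2 ^ n) :
    cexpInd m m0 μ (dyadicChain half n k) =ᵐ[μ] fun _ => (k : ℝ) / 2 ^ n := by
  induction n generalizing k with
  | zero =>
    rw [pow_zero] at hk
    interval_cases k
    · simp [dyadicChain, cexpInd]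
    · simp [dyadicChain, cexpInd_univ hm]
  | succ n ih =>
    have hS := measurableSet_dyadicChain h_meas n
    obtain ⟨j, rfl | rfl⟩ := Nat.even_or_odd' k
    · rw [dyadicChain_succ_two_mul]
      filter_upwards [ih (k := j) (by rw [pow_succ] at hk; omega)] with ω hω
      rw [hω]
      push_cast
      ring
    · have hgap := (hS (j + 1)).diff (hS j)
      rw [dyadicChain_succ_two_mul_add_one]
      filter_upwards [cexpInd_union (m := m) (hS j) (h_meas _ hgap)
          (disjoint_sdiff_right.mono_right (h_sub _)), h_half _ hgap,
        cexpInd_diff (m := m) (hS (j + 1)) (hS j) (dyadicChain_mono h_sub n j.le_succ),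
        ih (k := j) (by rw [pow_succ] at hk; omega),
        ih (k := j + 1) (by rw [pow_succ] at hk; omega)] with ω h1 h2 h3 h4 h5
      rw [h1, Pi.add_apply, h2, h3, Pi.sub_apply, h4, h5]
      push_cast
      ring

section DyadicLimit

variable {Ω : Type*} (S : ℕ → ℕ → Set Ω)

noncomputable def dyadicIndex (n : ℕ) (ω : Ω) : ℕ := sInf {k | ω ∈ S n k}

noncomputable def dyadicLimit (ω : Ω) : ℝ := ⨅ n, (dyadicIndex S n ω : ℝ) / 2 ^ n

variable {S}

lemma dyadicIndex_le_iff (hS_mono : ∀ n, Monotone (S n)) (hS_top : ∀ n, S n (2 ^ n) = univ)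
    {n k : ℕ} {ω : Ω} : dyadicIndex S n ω ≤ k ↔ ω ∈ S n k := by
  have hne : {k | ω ∈ S n k}.Nonempty := ⟨2 ^ n, by rw [mem_ofPred_eq, hS_top]; trivial⟩
  exact ⟨fun h => hS_mono n h (Nat.sInf_mem hne), fun h => Nat.sInf_le h⟩

lemma bddBelow_range_dyadicIndex_div (ω : Ω) :
    BddBelow (range fun n => (dyadicIndex S n ω : ℝ) / 2 ^ n) :=
  ⟨0, by rintro _ ⟨n, rfl⟩; positivity⟩

lemma dyadicLimit_nonneg (ω : Ω) : 0 ≤ dyadicLimit S ω :=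
  Real.iInf_nonneg fun n => by positivity

lemma dyadicLimit_le_one (hS_top : ∀ n, S n (2 ^ n) = univ) (ω : Ω) :
    dyadicLimit S ω ≤ 1 := by
  refine (ciInf_le (bddBelow_range_dyadicIndex_div ω) 0).trans ?_
  have h : dyadicIndex S 0 ω ≤ 1 :=
    Nat.sInf_le (by rw [mem_ofPred_eq, ← pow_zero 2, hS_top]; trivial)
  simpa using h

lemma dyadicIndex_div_lt_iff (hS_mono : ∀ n, Monotone (S n)) (hS_top : ∀ n, S n (2 ^ n) = univ)
    {x : ℝ} (hx : 0 < x) (n : ℕ) (ω : Ω) :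
    (dyadicIndex S n ω : ℝ) / 2 ^ n < x ↔ ω ∈ S n (⌈x * 2 ^ n⌉₊ - 1) := by
  have hceil : 1 ≤ ⌈x * 2 ^ n⌉₊ := Nat.one_le_ceil_iff.2 (by positivity)
  rw [div_lt_iff₀ (by positivity), ← Nat.lt_ceil, ← dyadicIndex_le_iff hS_mono hS_top]
  omega

lemma dyadicIndex_div_antitone (hS_mono : ∀ n, Monotone (S n))
    (hS_top : ∀ n, S n (2 ^ n) = univ) (hS_succ : ∀ n k, S (n + 1) (2 * k) = S n k) (ω : Ω) :
    Antitone fun n => (dyadicIndex S n ω : ℝ) / 2 ^ n := by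
  refine antitone_nat_of_succ_le fun n => ?_
  have h : dyadicIndex S (n + 1) ω ≤ 2 * dyadicIndex S n ω := by
    rw [dyadicIndex_le_iff hS_mono hS_top, hS_succ, ← dyadicIndex_le_iff hS_mono hS_top]
  calc (dyadicIndex S (n + 1) ω : ℝ) / 2 ^ (n + 1)
      ≤ (2 * dyadicIndex S n ω : ℕ) / 2 ^ (n + 1) := by gcongr
    _ = (dyadicIndex S n ω : ℝ) / 2 ^ n := by push_cast; ring

variable [MeasurableSpace Ω]

lemma measurable_dyadicLimit (hS_meas : ∀ n k, MeasurableSet (S n k))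
    (hS_mono : ∀ n, Monotone (S n)) (hS_top : ∀ n, S n (2 ^ n) = univ) :
    Measurable (dyadicLimit S) := by
  refine Measurable.iInf fun n => ?_
  have hN : Measurable (dyadicIndex S n) := measurable_of_Iic fun k => by
    convert hS_meas n k using 1
    ext ω
    exact dyadicIndex_le_iff hS_mono hS_top
  fun_prop

lemma measure_dyadicLimit_lt (ν : Measure Ω) [IsFiniteMeasure ν]
    (hS_mono : ∀ n, Monotone (S n)) (hS_top : ∀ n, S n (2 ^ n) = univ)
    (hS_succ : ∀ n k, S (n + 1) (2 * k) = S n k)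
    (hν : ∀ n k, k ≤ 2 ^ n → ν (S n k) = ENNReal.ofReal (k / 2 ^ n) * ν univ)
    {x : ℝ} (hx0 : 0 < x) (hx1 : x ≤ 1) :
    ν (dyadicLimit S ⁻¹' Iio x) = ENNReal.ofReal x * ν univ := by
  have hlt := dyadicIndex_div_lt_iff hS_mono hS_top hx0
  have hU : dyadicLimit S ⁻¹' Iio x = ⋃ n, S n (⌈x * 2 ^ n⌉₊ - 1) := by
    ext ω
    simp only [mem_preimage, mem_Iio, mem_iUnion, dyadicLimit,
      ciInf_lt_iff (bddBelow_range_dyadicIndex_div ω), hlt]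
  have hmono : Monotone fun n => S n (⌈x * 2 ^ n⌉₊ - 1) := fun i j hij ω hω =>
    (hlt j ω).1 <| (dyadicIndex_div_antitone hS_mono hS_top hS_succ ω hij).trans_lt
      ((hlt i ω).2 hω)
  have hk : ∀ n : ℕ, ⌈x * 2 ^ n⌉₊ - 1 ≤ 2 ^ n := fun n =>
    (Nat.sub_le _ _).trans <| Nat.ceil_le.2 <| by
      push_cast
      exact mul_le_of_le_one_left (by positivity) hx1
  rw [hU]
  refine tendsto_nhds_unique (tendsto_measure_iUnion_atTop hmono) ?_
  simp only [Function.comp_def, hν _ _ (hk _)]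
  exact ENNReal.Tendsto.mul_const
    (ENNReal.tendsto_ofReal (tendsto_natCeil_mul_two_pow_sub_one_div hx0))
    (Or.inr (measure_ne_top ν univ))

theorem map_dyadicLimit (ν : Measure Ω) [IsFiniteMeasure ν]
    (hS_meas : ∀ n k, MeasurableSet (S n k)) (hS_mono : ∀ n, Monotone (S n))
    (hS_top : ∀ n, S n (2 ^ n) = univ) (hS_succ : ∀ n k, S (n + 1) (2 * k) = S n k)
    (hν : ∀ n k, k ≤ 2 ^ n → ν (S n k) = ENNReal.ofReal (k / 2 ^ n) * ν univ) :
    ν.map (dyadicLimit S) = ν univ • volume.restrict (Icc 0 1) := by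
  have hU := measurable_dyadicLimit hS_meas hS_mono hS_top
  refine ext_of_generate_finite _ (BorelSpace.measurable_eq.trans (borel_eq_generateFrom_Iio ℝ))
    isPiSystem_Iio ?_ (by simp [Measure.map_apply hU MeasurableSet.univ])
  rintro _ ⟨x, rfl⟩
  rw [Measure.map_apply hU measurableSet_Iio, Measure.smul_apply,
    Measure.restrict_apply measurableSet_Iio, smul_eq_mul]
  rcases le_or_gt x 0 with hx0 | hx0
  · have h1 : dyadicLimit S ⁻¹' Iio x = ∅ :=
      eq_empty_of_forall_notMem fun ω hω => (dyadicLimit_nonneg ω).not_gt (hω.trans_le hx0)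
    have h2 : Iio x ∩ Icc (0 : ℝ) 1 = ∅ :=
      eq_empty_of_forall_notMem fun y hy => hy.2.1.not_gt (hy.1.trans_le hx0)
    simp [h1, h2]
  rcases le_or_gt x 1 with hx1 | hx1
  · have h : Iio x ∩ Icc (0 : ℝ) 1 = Ico 0 x := by
      ext y
      simp only [mem_inter_iff, mem_Iio, mem_Icc, mem_Ico]
      exact ⟨fun h => ⟨h.2.1, h.1⟩, fun h => ⟨h.2, h.1, by linarith [h.2]⟩⟩
    rw [measure_dyadicLimit_lt ν hS_mono hS_top hS_succ hν hx0 hx1, h,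
      Real.volume_Ico, sub_zero, mul_comm]
  · have h1 : dyadicLimit S ⁻¹' Iio x = univ :=
      eq_univ_of_forall fun ω => (dyadicLimit_le_one hS_top ω).trans_lt hx1
    have h2 : Iio x ∩ Icc (0 : ℝ) 1 = Icc 0 1 :=
      inter_eq_right.2 fun y hy => hy.2.trans_lt hx1
    simp [h1, h2]

end DyadicLimit

namespace CondAtomless

variable {Ω : Type*} {m m0 : MeasurableSpace Ω} {μ : Measure Ω} [IsFiniteMeasure μ]

theorem exists_map_restrict_eq (hm : m ≤ m0) (hatom : CondAtomless m m0 μ) :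
    ∃ U : Ω → ℝ, Measurable U ∧ ∀ C, MeasurableSet[m] C →
      (μ.restrict C).map U = μ C • volume.restrict (Icc 0 1) := by
  obtain ⟨half, h_sub, h_half⟩ := hatom.exists_halving hm
  have h_meas D hD := (h_half D hD).1
  have hS_meas := measurableSet_dyadicChain h_meas
  have hS_mono := dyadicChain_mono h_sub
  have hS_top n : dyadicChain half n (2 ^ n) = univ := dyadicChain_of_two_pow_le le_rfl
  refine ⟨dyadicLimit (dyadicChain half), measurable_dyadicLimit hS_meas hS_mono hS_top,
    fun C hC => ?_⟩
  simpa using map_dyadicLimit (μ.restrict C) hS_meas hS_mono hS_top dyadicChain_succ_two_mul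
    fun n k hk => by
      rw [Measure.restrict_apply (hS_meas n k), Measure.restrict_apply .univ, univ_inter]
      exact measure_inter_eq_of_cexpInd_eq_const hm (hS_meas n k) (by positivity)
        (cexpInd_dyadicChain hm h_sub h_meas (fun D hD => (h_half D hD).2) hk) hC

end CondAtomless

theorem stmt3 {Ω : Type*} (F1 F2 : MeasurableSpace Ω) (hle : F1 ≤ F2)
    (P : @Measure Ω F2) (hP : @IsProbabilityMeasure Ω F2 P)
    (hatomless : CondAtomless F1 F2 P) :
    ∃ U : Ω → ℝ, Measurable[F2] U ∧
      Measure.map U P = volume.restrict (Set.Icc (0 : ℝ) 1) ∧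
      ProbabilityTheory.Indep (MeasurableSpace.comap U Real.measurableSpace) F1 P := by
  obtain ⟨U, hU, hlaw⟩ := hatomless.exists_map_restrict_eq hle
  have hlaw_univ : P.map U = volume.restrict (Icc 0 1) := by simpa using hlaw univ .univ
  refine ⟨U, hU, hlaw_univ, (Indep_iff _ _ _).2 ?_⟩
  rintro _ C ⟨s, hs, rfl⟩ hC
  have h := congrArg (· s) (hlaw C hC)
  simp only [Measure.map_apply hU hs, Measure.restrict_apply (hU hs), Measure.smul_apply,
    smul_eq_mul] at h
  rw [h, ← hlaw_univ, Measure.map_apply hU hs, mul_comm]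
end

section
/- F2 is atomless conditionally to F1 if and only if for every A ∈ F2 with P[A] > 0 there exists B ∈ F2 with B ⊆ A such that P[{ω : 0 < E[1_B | F1](ω) < E[1_A | F1](ω)}] > 0. -/
open MeasureTheory ProbabilityTheory Set
open scoped ENNReal

/-! If `P A > 0` then `{E[1_A | F1] > 0}` is not null, which gives the forward direction.
For the converse, call an `F1`-set `D` split for `A` if some `B ⊆ A` satisfies
`0 < E[1_B | F1] < E[1_A | F1]` a.e. on `D`. Since conditional expectation is local on
`F1`-sets, witnesses can be glued along a disjointification, so split sets are closed under
countable unions, and an exhaustion argument yields a split set `D` containing every split set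
up to null sets. If `D` missed a non-null part `E` of `{E[1_A | F1] > 0}`, the hypothesis
applied to `E ∩ A` would produce a non-null split set inside `E`. -/

lemma MeasureTheory.exists_ae_le_of_iUnion_mem {α : Type*} {mα : MeasurableSpace α}
    (μ : Measure α) [IsFiniteMeasure μ] {C : Set (Set α)} (hC : C.Nonempty)
    (hmeas : ∀ s ∈ C, MeasurableSet s)
    (hU : ∀ s : ℕ → Set α, (∀ n, s n ∈ C) → ⋃ n, s n ∈ C) :
    ∃ t ∈ C, ∀ s ∈ C, s ≤ᵐ[μ] t := by
  obtain ⟨u, -, hu_lim, hu_mem⟩ := exists_seq_tendsto_sSup (hC.image μ) (OrderTop.bddAbove _)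
  choose s hsC hsu using hu_mem
  have htC : ⋃ n, s n ∈ C := hU s hsC
  set t := ⋃ n, s n
  have hsup : sSup (μ '' C) ≤ μ t :=
    le_of_tendsto' hu_lim fun n => hsu n ▸ measure_mono (subset_iUnion s n)
  refine ⟨t, htC, fun r hr => ?_⟩
  have hunion : t ∪ r ∈ C := by
    convert hU (fun n => if n = 0 then t else r) (fun n => by split_ifs <;> assumption)
    ext ω
    simp only [mem_union, mem_iUnion]
    constructor
    · rintro (h | h)
      exacts [⟨0, by simpa using h⟩, ⟨1, by simpa using h⟩]
    · rintro ⟨n, hn⟩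
      split_ifs at hn <;> simp [hn]
  have hmax : μ t + μ (r \ t) ≤ μ t + 0 := by
    rw [← measure_union disjoint_sdiff_right ((hmeas r hr).diff (hmeas t htC)),
      union_sdiff_self, add_zero]
    exact (le_sSup (mem_image_of_mem μ hunion)).trans hsup
  exact ae_le_set.2 (nonpos_iff_eq_zero.1 (ENNReal.le_of_add_le_add_left (measure_ne_top μ t) hmax))

def CondSplitsOn {Ω : Type*} (F1 F2 : MeasurableSpace Ω) (P : @Measure Ω F2) (A D : Set Ω) :
    Prop :=
  ∃ B : Set Ω, MeasurableSet[F2] B ∧ B ⊆ A ∧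
    ∀ᵐ ω ∂P, ω ∈ D → 0 < cexpInd F1 F2 P B ω ∧ cexpInd F1 F2 P B ω < cexpInd F1 F2 P A ω

section CondSplitsOn

open Function

variable {Ω : Type*} {F1 F2 : MeasurableSpace Ω} {P : @Measure Ω F2} {A D : Set Ω}

lemma cexpInd_nonneg_s4 (A : Set Ω) : 0 ≤ᵐ[P] cexpInd F1 F2 P A :=
  condExp_nonneg (ae_of_all _ fun _ => indicator_nonneg (fun _ _ => zero_le_one) _)

lemma stronglyMeasurable_cexpInd_s4 (A : Set Ω) : StronglyMeasurable[F1] (cexpInd F1 F2 P A) :=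
  stronglyMeasurable_condExp

lemma cexpInd_inter_ae_eq [IsFiniteMeasure P] (hA : MeasurableSet[F2] A)
    (hD : MeasurableSet[F1] D) :
    cexpInd F1 F2 P (D ∩ A) =ᵐ[P] D.indicator (cexpInd F1 F2 P A) := by
  rw [cexpInd, ← indicator_indicator]
  exact condExp_indicator ((integrable_const 1).indicator hA) hD

lemma measure_cexpInd_pos_pos_iff (hle : F1 ≤ F2) [IsFiniteMeasure P]
    (hA : MeasurableSet[F2] A) :
    0 < P {ω | 0 < cexpInd F1 F2 P A ω} ↔ 0 < P A := by
  have hint : ∫ ω, cexpInd F1 F2 P A ω ∂P = P.real A :=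
    (integral_condExp hle).trans (integral_indicator_one hA)
  have hzero : P {ω | 0 < cexpInd F1 F2 P A ω} = 0 ↔ cexpInd F1 F2 P A =ᵐ[P] 0 := by
    rw [measure_eq_zero_iff_ae_notMem]
    refine Filter.eventually_congr ?_
    filter_upwards [cexpInd_nonneg_s4 A] with ω hω
    simpa [not_lt] using hω.ge_iff_eq'
  rw [pos_iff_ne_zero, pos_iff_ne_zero, not_iff_not, hzero, ← integral_eq_zero_iff_of_nonneg_ae
    (cexpInd_nonneg_s4 A) integrable_condExp, hint, measureReal_eq_zero_iff]

lemma CondSplitsOn.mono_ae {D' : Set Ω} (h : CondSplitsOn F1 F2 P A D) (hD : D' ≤ᵐ[P] D) :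
    CondSplitsOn F1 F2 P A D' := by
  obtain ⟨B, hB, hBA, hsplit⟩ := h
  exact ⟨B, hB, hBA, by filter_upwards [hsplit, hD] with ω h hω h' using h (hω h')⟩

lemma cexpInd_ae_eq_on_of_inter_eq [IsFiniteMeasure P] {B B' : Set Ω}
    (hD : MeasurableSet[F1] D) (hB : MeasurableSet[F2] B) (hB' : MeasurableSet[F2] B')
    (h : D ∩ B = D ∩ B') :
    ∀ᵐ ω ∂P, ω ∈ D → cexpInd F1 F2 P B ω = cexpInd F1 F2 P B' ω := by
  filter_upwards [cexpInd_inter_ae_eq hB hD, cexpInd_inter_ae_eq hB' hD] with ω hω hω' hωD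
  rw [h] at hω
  simpa [indicator_of_mem hωD] using hω.symm.trans hω'

lemma CondSplitsOn.iUnion_of_pairwise_disjoint (hle : F1 ≤ F2) [IsFiniteMeasure P]
    {D : ℕ → Set Ω} (hD : ∀ n, MeasurableSet[F1] (D n)) (hdisj : Pairwise (Disjoint on D))
    (h : ∀ n, CondSplitsOn F1 F2 P A (D n)) :
    CondSplitsOn F1 F2 P A (⋃ n, D n) := by
  choose B hB hBA hsplit using h
  have hglue : MeasurableSet[F2] (⋃ n, D n ∩ B n) :=
    .iUnion fun n => (hle _ (hD n)).inter (hB n)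
  have hinter : ∀ n, D n ∩ ⋃ m, D m ∩ B m = D n ∩ B n := fun n => by
    ext ω
    simp only [mem_inter_iff, mem_iUnion]
    refine ⟨fun ⟨hωn, m, hωm, hωB⟩ => ?_, fun ⟨hωn, hωB⟩ => ⟨hωn, n, hωn, hωB⟩⟩
    obtain rfl : m = n := hdisj.eq (not_disjoint_iff.2 ⟨ω, hωm, hωn⟩)
    exact ⟨hωn, hωB⟩
  refine ⟨⋃ n, D n ∩ B n, hglue, iUnion_subset fun n => inter_subset_right.trans (hBA n), ?_⟩
  have heq := fun n => cexpInd_ae_eq_on_of_inter_eq (P := P) (hD n) hglue (hB n) (hinter n)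
  filter_upwards [ae_all_iff.2 heq, ae_all_iff.2 hsplit] with ω heq hsplit hω
  obtain ⟨n, hn⟩ := mem_iUnion.1 hω
  rw [heq n hn]
  exact hsplit n hn

lemma CondSplitsOn.iUnion (hle : F1 ≤ F2) [IsFiniteMeasure P]
    {D : ℕ → Set Ω} (hD : ∀ n, MeasurableSet[F1] (D n))
    (h : ∀ n, CondSplitsOn F1 F2 P A (D n)) :
    CondSplitsOn F1 F2 P A (⋃ n, D n) := by
  rw [← iUnion_disjointed]
  exact .iUnion_of_pairwise_disjoint hle (MeasurableSet.disjointed hD) (disjoint_disjointed D)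
    fun n => (h n).mono_ae (.of_forall (disjointed_subset D n))

lemma measurableSet_cexpInd_split (B : Set Ω) :
    MeasurableSet[F1] {ω | 0 < cexpInd F1 F2 P B ω ∧ cexpInd F1 F2 P B ω < cexpInd F1 F2 P A ω} :=
  have hB := (stronglyMeasurable_cexpInd_s4 (P := P) B).measurable
  (measurableSet_lt measurable_const hB).inter
    (measurableSet_lt hB (stronglyMeasurable_cexpInd_s4 A).measurable)

lemma setOf_cexpInd_inter_pos_ae_eq [IsFiniteMeasure P] (hA : MeasurableSet[F2] A)
    (hD : MeasurableSet[F1] D) :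
    ({ω | 0 < cexpInd F1 F2 P (D ∩ A) ω} : Set Ω) =ᵐ[P]
      (D ∩ {ω | 0 < cexpInd F1 F2 P A ω} : Set Ω) := by
  filter_upwards [cexpInd_inter_ae_eq hA hD] with ω hω
  refine propext (show 0 < cexpInd F1 F2 P (D ∩ A) ω ↔ ω ∈ D ∧ 0 < cexpInd F1 F2 P A ω from ?_)
  by_cases hωD : ω ∈ D <;> simp [hω, hωD]

lemma exists_condSplitsOn_of_measure_pos (hle : F1 ≤ F2) [IsFiniteMeasure P]
    (h : ∀ A : Set Ω, MeasurableSet[F2] A → 0 < P A →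
      ∃ B : Set Ω, MeasurableSet[F2] B ∧ B ⊆ A ∧
        0 < P {ω | 0 < cexpInd F1 F2 P B ω ∧ cexpInd F1 F2 P B ω < cexpInd F1 F2 P A ω})
    (hA : MeasurableSet[F2] A) {E : Set Ω} (hE : MeasurableSet[F1] E)
    (hEA : E ⊆ {ω | 0 < cexpInd F1 F2 P A ω}) (hPE : 0 < P E) :
    ∃ S, MeasurableSet[F1] S ∧ S ≤ᵐ[P] E ∧ 0 < P S ∧ CondSplitsOn F1 F2 P A S := by
  have hEA' : MeasurableSet[F2] (E ∩ A) := (hle _ hE).inter hA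
  have hPEA : 0 < P (E ∩ A) := by
    rwa [← measure_cexpInd_pos_pos_iff hle hEA',
      measure_congr (setOf_cexpInd_inter_pos_ae_eq hA hE), inter_eq_left.2 hEA]
  obtain ⟨B, hB, hBEA, hpos⟩ := h (E ∩ A) hEA' hPEA
  set S := {ω | 0 < cexpInd F1 F2 P B ω ∧ cexpInd F1 F2 P B ω < cexpInd F1 F2 P (E ∩ A) ω}
  -- Off `E` the conditional expectation of `1_{E ∩ A}` vanishes, so `S` lies in `E`.
  have hSE : ∀ᵐ ω ∂P, ω ∈ S → ω ∈ E ∧ cexpInd F1 F2 P (E ∩ A) ω = cexpInd F1 F2 P A ω := by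
    filter_upwards [cexpInd_inter_ae_eq hA hE] with ω hω ⟨hBpos, hBlt⟩
    by_cases hωE : ω ∈ E
    · exact ⟨hωE, by rw [hω, indicator_of_mem hωE]⟩
    · rw [hω, indicator_of_notMem hωE] at hBlt
      exact absurd (hBpos.trans hBlt) (lt_irrefl 0)
  refine ⟨S, measurableSet_cexpInd_split B, ?_, hpos, B, hB, hBEA.trans inter_subset_right, ?_⟩
  · filter_upwards [hSE] with ω hω hωS using (hω hωS).1
  · filter_upwards [hSE] with ω hω hωS
    exact ⟨hωS.1, (hω hωS).2 ▸ hωS.2⟩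

end CondSplitsOn

theorem stmt4 {Ω : Type*} (F1 F2 : MeasurableSpace Ω) (hle : F1 ≤ F2)
    (P : @Measure Ω F2) (hP : @IsProbabilityMeasure Ω F2 P) :
    CondAtomless F1 F2 P ↔
      ∀ A : Set Ω, MeasurableSet[F2] A → 0 < P A →
        ∃ B : Set Ω, MeasurableSet[F2] B ∧ B ⊆ A ∧
          0 < P {ω | 0 < cexpInd F1 F2 P B ω ∧
            cexpInd F1 F2 P B ω < cexpInd F1 F2 P A ω} := by
  constructor
  · intro h A hA hPA
    obtain ⟨B, hB, hBA, hsplit⟩ := h A hA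
    refine ⟨B, hB, hBA, ((measure_cexpInd_pos_pos_iff hle hA).2 hPA).trans_le
      (measure_mono_ae ?_)⟩
    filter_upwards [hsplit] with ω hω using hω
  · intro h A hA
    set G := {ω | 0 < cexpInd F1 F2 P A ω}
    have hG : MeasurableSet[F1] G :=
      measurableSet_lt measurable_const (stronglyMeasurable_cexpInd_s4 A).measurable
    obtain ⟨D, ⟨hD, hDsplit⟩, hmax⟩ := exists_ae_le_of_iUnion_mem P
      (C := {D | MeasurableSet[F1] D ∧ CondSplitsOn F1 F2 P A D})
      ⟨∅, @MeasurableSet.empty _ F1, ∅, .empty, empty_subset A, ae_of_all _ fun _ h => h.elim⟩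
      (fun D hD => hle _ hD.1) (fun D hD => ⟨.iUnion fun n => (hD n).1,
        CondSplitsOn.iUnion hle (fun n => (hD n).1) fun n => (hD n).2⟩)
    refine hDsplit.mono_ae (ae_le_set.2 (not_not.1 fun hne => ?_))
    obtain ⟨S, hS, hSGD, hPS, hSsplit⟩ := exists_condSplitsOn_of_measure_pos hle h hA
      (hG.diff hD) sdiff_subset (pos_iff_ne_zero.2 hne)
    refine hPS.ne' (measure_eq_zero_iff_ae_notMem.2 ?_)
    filter_upwards [hSGD, hmax S ⟨hS, hSsplit⟩] with ω hGD hD hS using (hGD hS).2 (hD hS)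
end

section
/- Let B ⊆ F2 be a sub-σ-algebra independent of F1 and let U be a B-measurable random variable uniformly distributed on [0,1]. Set B_t = {U ≤ t} for t ∈ [0,1]. Then for every A ∈ F2 with P[{E[1_A | F1] > 0}] > 0 there exists t ∈ (0,1) such that P[{ω : 0 < E[1_{A ∩ B_t} | F1](ω) < E[1_A | F1](ω)}] > 0. -/
open MeasureTheory ProbabilityTheory Set
open scoped ENNReal

/-!
Write `g t = E[1_{A ∩ {U ≤ t}} | F1]`. The event `{a < U ≤ b}` lies in `B`, which is independent
of `F1`, so its conditional probability is the constant `b - a`. Hence, almost surely and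
simultaneously for all rational `0 ≤ a ≤ b ≤ 1`: `g 0 ≤ 0`, `g b ≤ g a + (b - a)` and
`E[1_A | F1] ≤ g a + (1 - a)`. At a point where `E[1_A | F1] > 1/N`, the first grid point `k/N`
at which `g` becomes positive is interior and satisfies `0 < g (k/N) ≤ 1/N < E[1_A | F1]`.
So almost every point of `{E[1_A | F1] > 0}` is served by some rational `t`, and one of these
countably many `t` serves a set of positive measure.
-/

theorem exists_pos_le_of_le_add {α : Type*} [AddCommMonoid α] [LinearOrder α]
    [IsOrderedAddMonoid α] (h : ℕ → α) {δ : α} {n : ℕ} (h0 : h 0 ≤ 0) (hn : 0 < h n)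
    (hstep : ∀ k < n, h (k + 1) ≤ h k + δ) :
    ∃ k ≤ n, 0 < k ∧ 0 < h k ∧ h k ≤ δ := by
  induction n with
  | zero => exact absurd hn h0.not_gt
  | succ n ih =>
    by_cases hpos : 0 < h n
    · obtain ⟨k, hkn, hk⟩ := ih hpos fun k hk => hstep k (by omega)
      exact ⟨k, by omega, hk⟩
    · exact ⟨n + 1, le_rfl, n.succ_pos, hn,
        (hstep n n.lt_succ_self).trans (add_le_of_nonpos_left (not_lt.1 hpos))⟩

theorem exists_rat_pos_lt_of_le_add (φ : ℚ → ℝ) {c : ℝ} (hc : 0 < c) (h0 : φ 0 ≤ 0)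
    (hstep : ∀ q s : ℚ, 0 ≤ q → q ≤ s → s ≤ 1 → φ s ≤ φ q + (s - q))
    (htop : ∀ q : ℚ, 0 ≤ q → q ≤ 1 → c ≤ φ q + (1 - q)) :
    ∃ q : ℚ, 0 < q ∧ q < 1 ∧ 0 < φ q ∧ φ q < c := by
  obtain ⟨n, hn⟩ := exists_nat_one_div_lt hc
  have hN : (0 : ℚ) < n + 2 := by positivity
  set δ : ℝ := ((1 / (n + 2) : ℚ) : ℝ)
  have hδc : δ < c := by
    refine lt_of_le_of_lt ?_ hn
    simp only [δ]; push_cast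
    gcongr
    linarith
  have hlast : 0 < φ ((n + 1 : ℕ) / (n + 2)) := by
    have hend := htop ((n + 1 : ℕ) / (n + 2)) (by positivity)
      (by rw [div_le_one hN]; push_cast; linarith)
    have hgap : (1 : ℝ) - (((n + 1 : ℕ) / (n + 2) : ℚ) : ℝ) = δ := by
      simp only [δ]; push_cast; field_simp; ring
    linarith [hend]
  have hgrid : ∀ k < n + 1, φ ((k + 1 : ℕ) / (n + 2)) ≤ φ (k / (n + 2)) + δ := by
    intro k hk
    have hinc := hstep (k / (n + 2)) ((k + 1 : ℕ) / (n + 2)) (by positivity) (by gcongr; simp)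
      (by rw [div_le_one hN]; exact_mod_cast (by omega : k + 1 ≤ n + 2))
    convert hinc using 2
    simp only [δ]; push_cast; field_simp; ring
  obtain ⟨k, hkn, hk0, hkpos, hkδ⟩ :=
    exists_pos_le_of_le_add (fun k : ℕ => φ (k / (n + 2))) (by simpa using h0) hlast hgrid
  refine ⟨k / (n + 2), by positivity, ?_, hkpos, hkδ.trans_lt hδc⟩
  rw [div_lt_one hN]
  exact_mod_cast (by omega : k < n + 2)

theorem exists_measure_pos_of_ae_imp_exists {α ι : Type*} [MeasurableSpace α] [Countable ι]
    {μ : Measure α} {S : Set α} {T : ι → Set α} (hS : 0 < μ S)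
    (h : ∀ᵐ x ∂μ, x ∈ S → ∃ i, x ∈ T i) : ∃ i, 0 < μ (T i) := by
  by_contra! hT
  have hS_le : S ≤ᵐ[μ] ⋃ i, T i := h.mono fun x hx hxS => mem_iUnion.2 (hx hxS)
  exact hS.ne' (measure_mono_null_ae hS_le
    (measure_iUnion_null fun i => nonpos_iff_eq_zero.1 (hT i)))

section
variable {Ω : Type*} {F1 B F2 : MeasurableSpace Ω} {P : Measure[F2] Ω}

theorem cexpInd_empty : cexpInd F1 F2 P ∅ = 0 := by
  rw [cexpInd, indicator_empty]
  exact condExp_zero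

theorem cexpInd_ae_le_add [IsFiniteMeasure P] {s t u : Set Ω} (hs : MeasurableSet[F2] s)
    (ht : MeasurableSet[F2] t) (hu : MeasurableSet[F2] u) (hst : s ⊆ t ∪ u) :
    cexpInd F1 F2 P s ≤ᵐ[P] cexpInd F1 F2 P t + cexpInd F1 F2 P u := by
  have hint {v : Set Ω} (hv : MeasurableSet[F2] v) :
      Integrable (v.indicator fun _ => (1 : ℝ)) P :=
    (integrable_const 1).indicator hv
  have hle :
      s.indicator (fun _ => (1 : ℝ)) ≤ t.indicator (fun _ => 1) + u.indicator fun _ => 1 :=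
    calc s.indicator (fun _ => (1 : ℝ))
      _ ≤ (t ∪ u).indicator fun _ => 1 :=
        indicator_le_indicator_of_subset hst fun _ => zero_le_one
      _ ≤ (t ∪ u).indicator (fun _ => 1) + (t ∩ u).indicator fun _ => 1 :=
        le_add_of_nonneg_right (indicator_nonneg (fun _ _ => zero_le_one))
      _ = t.indicator (fun _ => 1) + u.indicator fun _ => 1 := indicator_union_add_inter _ _ _
  exact (condExp_mono (hint hs) ((hint ht).add (hint hu)) (.of_forall hle)).trans_eq
    (condExp_add (hint ht) (hint hu) F1)

theorem cexpInd_ae_eq_measureReal [IsProbabilityMeasure P] (hle : F1 ≤ F2) (hBle : B ≤ F2)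
    (hindep : Indep B F1 P) {C : Set Ω} (hC : MeasurableSet[B] C) :
    cexpInd F1 F2 P C =ᵐ[P] fun _ => P.real C := by
  refine (condExp_indep_eq hBle hle (stronglyMeasurable_const.indicator hC) hindep).trans ?_
  simp [integral_indicator_const _ (hBle _ hC)]

theorem measureReal_le_eq_of_map_eq_uniform [IsProbabilityMeasure P] {U : Ω → ℝ}
    (hU : Measurable U) (hunif : P.map U = volume.restrict (Icc 0 1)) {t : ℝ} (ht0 : 0 ≤ t)
    (ht1 : t ≤ 1) : P.real {ω | U ω ≤ t} = t := by
  have hIcc : Iic t ∩ Icc 0 1 = Icc 0 t := by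
    ext x
    simp only [mem_inter_iff, mem_Iic, mem_Icc]
    exact ⟨fun ⟨hxt, hx0, _⟩ => ⟨hx0, hxt⟩,
      fun ⟨hx0, hxt⟩ => ⟨hxt, hx0, hxt.trans ht1⟩⟩
  change P.real (U ⁻¹' Iic t) = t
  rw [← map_measureReal_apply hU measurableSet_Iic, hunif,
    measureReal_restrict_apply measurableSet_Iic, hIcc, Real.volume_real_Icc_of_le ht0, sub_zero]

theorem cexpInd_ae_le_add_measureReal [IsProbabilityMeasure P] (hle : F1 ≤ F2) (hBle : B ≤ F2)
    (hindep : Indep B F1 P) {s t C : Set Ω} (hs : MeasurableSet[F2] s) (ht : MeasurableSet[F2] t)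
    (hC : MeasurableSet[B] C) (hst : s ⊆ t ∪ C) :
    ∀ᵐ ω ∂P, cexpInd F1 F2 P s ω ≤ cexpInd F1 F2 P t ω + P.real C := by
  filter_upwards [cexpInd_ae_le_add hs ht (hBle _ hC) hst,
    cexpInd_ae_eq_measureReal hle hBle hindep hC] with ω hω hCω
  rwa [Pi.add_apply, hCω] at hω

variable [IsProbabilityMeasure P] {U : Ω → ℝ} {A : Set Ω} {a b : ℝ}

theorem cexpInd_inter_le_le_add (hle : F1 ≤ F2) (hBle : B ≤ F2) (hindep : Indep B F1 P)
    (hU : Measurable[B] U) (hunif : P.map U = volume.restrict (Icc 0 1))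
    (hA : MeasurableSet[F2] A) (ha : 0 ≤ a) (hab : a ≤ b) (hb : b ≤ 1) :
    ∀ᵐ ω ∂P, cexpInd F1 F2 P (A ∩ {ω' | U ω' ≤ b}) ω ≤
      cexpInd F1 F2 P (A ∩ {ω' | U ω' ≤ a}) ω + (b - a) := by
  have hlev (t : ℝ) : MeasurableSet[B] {ω | U ω ≤ t} := measurableSet_le hU measurable_const
  have hU2 : Measurable[F2] U := hU.mono hBle le_rfl
  have hsub : {ω | U ω ≤ a} ⊆ {ω | U ω ≤ b} := fun ω h => h.trans hab
  have hC : P.real ({ω | U ω ≤ b} \ {ω | U ω ≤ a}) = b - a := by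
    rw [measureReal_sdiff hsub (hBle _ (hlev a)),
      measureReal_le_eq_of_map_eq_uniform hU2 hunif (ha.trans hab) hb,
      measureReal_le_eq_of_map_eq_uniform hU2 hunif ha (hab.trans hb)]
  rw [← hC]
  refine cexpInd_ae_le_add_measureReal hle hBle hindep (hA.inter (hBle _ (hlev b)))
    (hA.inter (hBle _ (hlev a))) ((hlev b).diff (hlev a)) ?_
  rintro ω ⟨hωA, hωb⟩
  by_cases hωa : U ω ≤ a
  · exact Or.inl ⟨hωA, hωa⟩
  · exact Or.inr ⟨hωb, hωa⟩

theorem cexpInd_le_cexpInd_inter_le_add (hle : F1 ≤ F2) (hBle : B ≤ F2)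
    (hindep : Indep B F1 P) (hU : Measurable[B] U) (hunif : P.map U = volume.restrict (Icc 0 1))
    (hA : MeasurableSet[F2] A) (ha : 0 ≤ a) (ha1 : a ≤ 1) :
    ∀ᵐ ω ∂P,
      cexpInd F1 F2 P A ω ≤ cexpInd F1 F2 P (A ∩ {ω' | U ω' ≤ a}) ω + (1 - a) := by
  have hlev : MeasurableSet[B] {ω | U ω ≤ a} := measurableSet_le hU measurable_const
  have hC : P.real {ω | U ω ≤ a}ᶜ = 1 - a := by
    rw [probReal_compl_eq_one_sub (hBle _ hlev),
      measureReal_le_eq_of_map_eq_uniform (hU.mono hBle le_rfl) hunif ha ha1]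
  rw [← hC]
  refine cexpInd_ae_le_add_measureReal hle hBle hindep hA (hA.inter (hBle _ hlev)) hlev.compl ?_
  intro ω hωA
  by_cases hωa : U ω ≤ a
  · exact Or.inl ⟨hωA, hωa⟩
  · exact Or.inr hωa

theorem cexpInd_inter_le_le (hle : F1 ≤ F2) (hBle : B ≤ F2) (hindep : Indep B F1 P)
    (hU : Measurable[B] U) (hunif : P.map U = volume.restrict (Icc 0 1))
    (hA : MeasurableSet[F2] A) (ha : 0 ≤ a) (ha1 : a ≤ 1) :
    ∀ᵐ ω ∂P, cexpInd F1 F2 P (A ∩ {ω' | U ω' ≤ a}) ω ≤ a := by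
  have hlev : MeasurableSet[B] {ω | U ω ≤ a} := measurableSet_le hU measurable_const
  filter_upwards [cexpInd_ae_le_add_measureReal hle hBle hindep (hA.inter (hBle _ hlev))
    MeasurableSet.empty hlev fun ω hω => Or.inr hω.2] with ω hω
  rwa [cexpInd_empty, Pi.zero_apply, zero_add,
    measureReal_le_eq_of_map_eq_uniform (hU.mono hBle le_rfl) hunif ha ha1] at hω

end

theorem stmt7 {Ω : Type*} (F1 B F2 : MeasurableSpace Ω) (hle : F1 ≤ F2) (hBle : B ≤ F2)
    (P : @Measure Ω F2) (hP : @IsProbabilityMeasure Ω F2 P)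
    (hindep : ProbabilityTheory.Indep B F1 P)
    (U : Ω → ℝ) (hU : Measurable[B] U)
    (hunif : Measure.map U P = volume.restrict (Set.Icc (0 : ℝ) 1)) :
    ∀ A : Set Ω, MeasurableSet[F2] A → 0 < P {ω | 0 < cexpInd F1 F2 P A ω} →
      ∃ t ∈ Set.Ioo (0 : ℝ) 1,
        0 < P {ω | 0 < cexpInd F1 F2 P (A ∩ {ω' | U ω' ≤ t}) ω ∧
          cexpInd F1 F2 P (A ∩ {ω' | U ω' ≤ t}) ω < cexpInd F1 F2 P A ω} := by
  intro A hA hApos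
  have hstep : ∀ᵐ ω ∂P, ∀ q s : ℚ, 0 ≤ q → q ≤ s → s ≤ 1 →
      cexpInd F1 F2 P (A ∩ {ω' | U ω' ≤ s}) ω ≤
        cexpInd F1 F2 P (A ∩ {ω' | U ω' ≤ q}) ω + (s - q) := by
    simp only [ae_all_iff, Filter.eventually_imp_distrib_left]
    exact fun q s hq hqs hs => cexpInd_inter_le_le_add hle hBle hindep hU hunif hA
      (by exact_mod_cast hq) (by exact_mod_cast hqs) (by exact_mod_cast hs)
  have htop : ∀ᵐ ω ∂P, ∀ q : ℚ, 0 ≤ q → q ≤ 1 →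
      cexpInd F1 F2 P A ω ≤ cexpInd F1 F2 P (A ∩ {ω' | U ω' ≤ q}) ω + (1 - q) := by
    simp only [ae_all_iff, Filter.eventually_imp_distrib_left]
    exact fun q hq hq1 => cexpInd_le_cexpInd_inter_le_add hle hBle hindep hU hunif hA
      (by exact_mod_cast hq) (by exact_mod_cast hq1)
  have hzero := cexpInd_inter_le_le hle hBle hindep hU hunif hA le_rfl zero_le_one
  suffices ∃ q : Ioo (0 : ℚ) 1,
      0 < P {ω | 0 < cexpInd F1 F2 P (A ∩ {ω' | U ω' ≤ q}) ω ∧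
        cexpInd F1 F2 P (A ∩ {ω' | U ω' ≤ q}) ω < cexpInd F1 F2 P A ω} by
    obtain ⟨⟨q, hq0, hq1⟩, hpos⟩ := this
    exact ⟨q, ⟨by exact_mod_cast hq0, by exact_mod_cast hq1⟩, hpos⟩
  refine exists_measure_pos_of_ae_imp_exists hApos ?_
  filter_upwards [hstep, htop, hzero] with ω hstep htop hzero hpos
  obtain ⟨q, hq0, hq1, hq⟩ := exists_rat_pos_lt_of_le_add
    (fun q : ℚ => cexpInd F1 F2 P (A ∩ {ω' | U ω' ≤ q}) ω) hpos (by simpa using hzero)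
    hstep htop
  exact ⟨⟨q, hq0, hq1⟩, hq⟩
end
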